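/- arXiv:2207.08437 — 3 statements merged into one kernel-verified Lean document; each statement's English description precedes it below -/
import Mathlib

section
/- Let L > 2 be an integer, A ∈ ℝ^{M×N}, y ∈ ℝ^M, ε > 0, and let Q₊ := min_{z ∈ S₊} ‖z‖₁. Let 0 < α ≤ (2ε/(L(Q₊ + N + ε)))^{1/(L−2)}. Suppose x : [0,∞) → ℝ^N is differentiable, satisfies the reduced gradient flow x'(t) = −[Aᵀ(A x(t)^{⊙L} − y)] ⊙ x(t)^{⊙(L−1)} for all t ≥ 0, has x(0) = α·𝟙 (all entries equal to α), and the limit x̃∞ := lim_{t→∞} x(t)^{⊙L} exists. Then ‖x̃∞‖₁ − min_{z ∈ S₊} ‖z‖₁ ≤ ε. -/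
open Filter Topology Matrix

noncomputable section

/-- The NNLS solution set `S₊ = argmin_{z ≥ 0} ‖Az − y‖₂²`. -/
def nnlsSet {M N : ℕ} (A : Matrix (Fin M) (Fin N) ℝ) (y : Fin M → ℝ) :
    Set (Fin N → ℝ) :=
  {z | (∀ i, 0 ≤ z i) ∧ ∀ w : Fin N → ℝ, (∀ i, 0 ≤ w i) →
    ∑ j, (A.mulVec z j - y j) ^ 2 ≤ ∑ j, (A.mulVec w j - y j) ^ 2}

/-- The reduced gradient flow `x'(t) = −[Aᵀ(A x(t)^{⊙L} − y)] ⊙ x(t)^{⊙(L−1)}` for `t ≥ 0`. -/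
def GradFlow {M N : ℕ} (A : Matrix (Fin M) (Fin N) ℝ) (y : Fin M → ℝ) (L : ℕ)
    (x : ℝ → Fin N → ℝ) : Prop :=
  ∀ t : ℝ, 0 ≤ t → ∀ i : Fin N,
    HasDerivAt (fun s => x s i)
      (-(Matrix.mulVec Aᵀ (A.mulVec (fun j => x t j ^ L) - y) i * x t i ^ (L - 1))) t

/-!
Along the flow every coordinate stays positive: it solves the linear equation `u' = H u` with the
continuous coefficient `H = -(Aᵀ(A x^L - y))_i x_i^{L-2}`. If `x_i → ξ_i` then the derivative of
`x_i` must tend to `0`, and `x_i` cannot increase forever towards `ξ_i = 0`; these are the KKT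
conditions of NNLS at `x̃∞ = ξ^L`, so `x̃∞ ∈ S₊` and `A x̃∞ = A z` for an ℓ¹-minimal `z ∈ S₊`.
Since `(x_i^{-(L-2)})' = (L-2) (Aᵀ(A x^L - y))_i`, the quantity `∑ (x̃∞ - z)_i x_i(t)^{-(L-2)}` is
conserved. At `t = 0` it is `α^{-(L-2)} (‖x̃∞‖₁ - Q₊)`, and for `t → ∞` it is at most
`∑ ξ_i^2 ≤ N + ‖x̃∞‖₁`. Hence `‖x̃∞‖₁ - Q₊ ≤ α^{L-2} (N + ‖x̃∞‖₁)`, and the choice of `α` turns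
this into `‖x̃∞‖₁ - Q₊ ≤ ε`.
-/

open Set

section LeastSquares

variable {M N : ℕ} (A : Matrix (Fin M) (Fin N) ℝ) (y : Fin M → ℝ)

def lsqLoss (v : Fin N → ℝ) : ℝ := ∑ j, ((A *ᵥ v) j - y j) ^ 2

def lsqGrad (v : Fin N → ℝ) : Fin N → ℝ := Aᵀ *ᵥ (A *ᵥ v - y)

lemma continuous_lsqGrad : Continuous (lsqGrad A y) := by
  unfold lsqGrad; fun_prop

lemma lsqLoss_eq (v w : Fin N → ℝ) :
    lsqLoss A y w = lsqLoss A y v + 2 * ((w - v) ⬝ᵥ lsqGrad A y v)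
      + ∑ j, ((A *ᵥ (w - v)) j) ^ 2 := by
  have hcross : ∑ j, ((A *ᵥ v) j - y j) * (A *ᵥ (w - v)) j = (w - v) ⬝ᵥ lsqGrad A y v := by
    rw [lsqGrad, Matrix.mulVec_transpose, dotProduct_comm, ← Matrix.dotProduct_mulVec]
    rfl
  rw [lsqLoss, lsqLoss, ← hcross, Finset.mul_sum, ← Finset.sum_add_distrib,
    ← Finset.sum_add_distrib]
  refine Finset.sum_congr rfl fun j _ => ?_
  rw [Matrix.mulVec_sub, Pi.sub_apply]
  ring

variable {A y}

lemma mem_nnlsSet_of_kkt {v : Fin N → ℝ} (hv : ∀ i, 0 ≤ v i) (hg : ∀ i, 0 ≤ lsqGrad A y v i)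
    (hcompl : ∀ i, v i * lsqGrad A y v i = 0) : v ∈ nnlsSet A y := by
  refine ⟨hv, fun w hw => ?_⟩
  have hdir : 0 ≤ (w - v) ⬝ᵥ lsqGrad A y v :=
    Finset.sum_nonneg fun i _ => by
      rw [Pi.sub_apply, sub_mul, hcompl i, sub_zero]
      exact mul_nonneg (hw i) (hg i)
  have hexp := lsqLoss_eq A y v w
  have hsq : 0 ≤ ∑ j, ((A *ᵥ (w - v)) j) ^ 2 := Finset.sum_nonneg fun j _ => sq_nonneg _
  change lsqLoss A y v ≤ lsqLoss A y w
  linarith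

lemma mulVec_eq_of_mem_nnlsSet {z z' : Fin N → ℝ} (hz : z ∈ nnlsSet A y)
    (hz' : z' ∈ nnlsSet A y) : A *ᵥ z = A *ᵥ z' := by
  set m : Fin N → ℝ := (1 / 2 : ℝ) • (z + z')
  have hm : ∀ i, 0 ≤ m i := fun i => by
    simp only [m, Pi.smul_apply, Pi.add_apply, smul_eq_mul]
    linarith [hz.1 i, hz'.1 i]
  have hpar : ∑ j, ((A *ᵥ z) j - (A *ᵥ z') j) ^ 2
      = 2 * lsqLoss A y z + 2 * lsqLoss A y z' - 4 * lsqLoss A y m := by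
    simp only [lsqLoss, Finset.mul_sum, ← Finset.sum_add_distrib, ← Finset.sum_sub_distrib]
    refine Finset.sum_congr rfl fun j _ => ?_
    simp only [m, Matrix.mulVec_smul, Matrix.mulVec_add, Pi.smul_apply, Pi.add_apply,
      smul_eq_mul]
    ring
  have hsq : ∑ j, ((A *ᵥ z) j - (A *ᵥ z') j) ^ 2 = 0 := by
    refine le_antisymm ?_ (Finset.sum_nonneg fun j _ => sq_nonneg _)
    have hzz' : lsqLoss A y z ≤ lsqLoss A y z' := hz.2 z' hz'.1
    have hz'z : lsqLoss A y z' ≤ lsqLoss A y z := hz'.2 z hz.1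
    have hzm : lsqLoss A y z ≤ lsqLoss A y m := hz.2 m hm
    linarith
  ext j
  have hj := (Finset.sum_eq_zero_iff_of_nonneg fun j _ => sq_nonneg _).1 hsq j (Finset.mem_univ j)
  exact sub_eq_zero.1 (eq_zero_of_pow_eq_zero hj)

lemma dotProduct_lsqGrad_eq_zero {c : Fin N → ℝ} (hc : A *ᵥ c = 0) (v : Fin N → ℝ) :
    c ⬝ᵥ lsqGrad A y v = 0 := by
  rw [lsqGrad, Matrix.mulVec_transpose, dotProduct_comm, ← Matrix.dotProduct_mulVec, hc,
    dotProduct_zero]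

end LeastSquares

lemma mul_sub_le_sub_of_le_hasDerivAt {f f' : ℝ → ℝ} {C a b : ℝ} (hab : a ≤ b)
    (hf : ∀ t ∈ Icc a b, HasDerivAt f (f' t) t) (hC : ∀ t ∈ Icc a b, C ≤ f' t) :
    C * (b - a) ≤ f b - f a := by
  have hint : interior (Icc a b) ⊆ Icc a b := interior_subset
  refine (convex_Icc a b).mul_sub_le_image_sub_of_le_deriv
    (fun t ht => (hf t ht).continuousAt.continuousWithinAt)
    (fun t ht => (hf t (hint ht)).differentiableAt.differentiableWithinAt)
    (fun t ht => (hf t (hint ht)).deriv ▸ hC t (hint ht))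
    a (left_mem_Icc.2 hab) b (right_mem_Icc.2 hab) hab

lemma tendsto_atTop_of_le_hasDerivAt {f f' : ℝ → ℝ} {C : ℝ} (hC : 0 < C)
    (hf : ∀ᶠ t in atTop, HasDerivAt f (f' t) t ∧ C ≤ f' t) : Tendsto f atTop atTop := by
  obtain ⟨a, ha⟩ := hf.exists_forall_of_atTop
  have hlin : Tendsto (fun t => C * t + (f a - C * a)) atTop atTop :=
    tendsto_atTop_add_const_right _ _ (tendsto_id.const_mul_atTop hC)
  refine tendsto_atTop_mono' _ ?_ hlin
  filter_upwards [eventually_ge_atTop a] with t hat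
  have hgrowth :=
    mul_sub_le_sub_of_le_hasDerivAt hat (fun s hs => (ha s hs.1).1) fun s hs => (ha s hs.1).2
  linarith

lemma eq_zero_of_tendsto_of_hasDerivAt {f f' : ℝ → ℝ} {c v : ℝ}
    (hf : ∀ᶠ t in atTop, HasDerivAt f (f' t) t) (hfc : Tendsto f atTop (𝓝 c))
    (hf' : Tendsto f' atTop (𝓝 v)) : v = 0 := by
  rcases lt_trichotomy v 0 with hv | hv | hv
  · have hgrow : Tendsto (-f) atTop atTop := by
      refine tendsto_atTop_of_le_hasDerivAt (C := -v / 2) (f' := -f') (by linarith) ?_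
      filter_upwards [hf, hf'.eventually (gt_mem_nhds (by linarith : v < v / 2))]
        with t hdt hlt
      exact ⟨hdt.neg, by simp only [Pi.neg_apply]; linarith⟩
    exact absurd hfc.neg (not_tendsto_nhds_of_tendsto_atTop hgrow _)
  · exact hv
  · have hgrow : Tendsto f atTop atTop := by
      refine tendsto_atTop_of_le_hasDerivAt (C := v / 2) (f' := f') (by linarith) ?_
      filter_upwards [hf, hf'.eventually (lt_mem_nhds (by linarith : v / 2 < v))]
        with t hdt hlt
      exact ⟨hdt, hlt.le⟩
    exact absurd hfc (not_tendsto_nhds_of_tendsto_atTop hgrow _)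

lemma pos_of_hasDerivAt_eq_mul_self {f H : ℝ → ℝ} (hf : ∀ t, 0 ≤ t → HasDerivAt f (H t * f t) t)
    (hH : ContinuousOn H (Ici 0)) (h0 : 0 < f 0) {T : ℝ} (hT : 0 ≤ T) : 0 < f T := by
  obtain ⟨C, hC⟩ := isCompact_Icc.exists_bound_of_continuousOn
    (hH.mono (Icc_subset_Ici_self : Icc 0 T ⊆ Ici 0))
  -- `f t ^ 2 * exp (2 C t)` is nondecreasing on `[0, T]`, so `f` cannot vanish there
  have hne : ∀ t ∈ Icc 0 T, f t ≠ 0 := by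
    intro t ht hft
    have hmono := mul_sub_le_sub_of_le_hasDerivAt (C := 0) ht.1
      (f := fun s => f s ^ 2 * Real.exp (2 * C * s))
      (fun s hs => ((hf s hs.1).pow 2).mul ((hasDerivAt_id s).const_mul (2 * C)).exp)
      (fun s hs => by
        have hHs : -C ≤ H s := neg_le_of_abs_le (by simpa using hC s ⟨hs.1, hs.2.trans ht.2⟩)
        have : 0 ≤ (H s + C) * (2 * f s ^ 2 * Real.exp (2 * C * s)) :=
          mul_nonneg (by linarith) (by positivity)
        simp only [Pi.pow_apply]
        norm_num
        linear_combination this)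
    simp only [hft, mul_zero, Real.exp_zero] at hmono
    nlinarith
  by_contra hneg
  obtain ⟨t, ht, hft⟩ := intermediate_value_Icc' hT
    (fun s hs => (hf s hs.1).continuousAt.continuousWithinAt) ⟨not_lt.1 hneg, h0.le⟩
  exact hne t ht hft

lemma HasDerivAt.inv_pow_of_eq_neg_mul_pow {f : ℝ → ℝ} {G t : ℝ} (n : ℕ)
    (hf : HasDerivAt f (-(G * f t ^ (n + 1))) t) (hft : f t ≠ 0) :
    HasDerivAt (fun s => (f s ^ n)⁻¹) (n * G) t := by
  refine ((hf.fun_pow n).fun_inv (pow_ne_zero n hft)).congr_deriv ?_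
  rcases n with _ | n
  · simp
  · field_simp
    push_cast
    ring

lemma nonneg_and_mul_eq_zero_of_hasDerivAt_eq_neg_mul_pow {f G : ℝ → ℝ} {ξ γ : ℝ} {n : ℕ}
    (hf : ∀ t, 0 ≤ t → HasDerivAt f (-(G t * f t ^ n)) t) (hpos : ∀ t, 0 ≤ t → 0 < f t)
    (hfξ : Tendsto f atTop (𝓝 ξ)) (hGγ : Tendsto G atTop (𝓝 γ)) : 0 ≤ γ ∧ ξ * γ = 0 := by
  have hder : ∀ᶠ t in atTop, HasDerivAt f (-(G t * f t ^ n)) t :=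
    (eventually_ge_atTop 0).mono hf
  have hlim : γ * ξ ^ n = 0 :=
    neg_eq_zero.1 (eq_zero_of_tendsto_of_hasDerivAt hder hfξ (hGγ.mul (hfξ.pow n)).neg)
  refine ⟨not_lt.1 fun hγ => ?_, ?_⟩
  · -- if `γ < 0` then `f` eventually increases, so its limit `ξ` is positive
    obtain ⟨a, ha⟩ := ((hGγ.eventually (gt_mem_nhds hγ)).and
      (eventually_ge_atTop 0)).exists_forall_of_atTop
    have hfa : f a ≤ ξ := ge_of_tendsto hfξ <| by
      filter_upwards [eventually_ge_atTop a] with t hat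
      have hmono := mul_sub_le_sub_of_le_hasDerivAt (C := 0) hat (fun s hs => hf s (ha s hs.1).2)
        fun s hs => by
          have hfs := pow_pos (hpos s (ha s hs.1).2) n
          nlinarith [(ha s hs.1).1]
      linarith
    have hξn : 0 < ξ ^ n := pow_pos ((hpos a (ha a le_rfl).2).trans_le hfa) n
    exact hγ.ne (by simpa [hξn.ne'] using hlim)
  · rcases mul_eq_zero.1 hlim with h | h
    · simp [h]
    · simp [eq_zero_of_pow_eq_zero h]

lemma tendsto_rpow_inv_of_tendsto_pow {ι : Type*} {f : ι → ℝ} {a : ℝ} {l : Filter ι} {n : ℕ}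
    (hn : n ≠ 0) (hf : ∀ᶠ t in l, 0 ≤ f t) (hfa : Tendsto (fun t => f t ^ n) l (𝓝 a)) :
    Tendsto f l (𝓝 (a ^ (n⁻¹ : ℝ))) :=
  (hfa.rpow_const (Or.inr (by positivity))).congr' <|
    hf.mono fun t ht => Real.pow_rpow_inv_natCast ht hn

lemma tendsto_pow_add_two_mul_inv_pow {ι : Type*} {f : ι → ℝ} {ξ : ℝ} {l : Filter ι} (n : ℕ)
    (hf : Tendsto f l (𝓝 ξ)) : Tendsto (fun t => ξ ^ (n + 2) * (f t ^ n)⁻¹) l (𝓝 (ξ ^ 2)) := by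
  rcases eq_or_ne ξ 0 with rfl | hξ
  · simpa using tendsto_const_nhds
  · convert ((hf.pow n).inv₀ (pow_ne_zero n hξ)).const_mul (ξ ^ (n + 2)) using 2
    field_simp
    ring

lemma sq_le_one_add_pow {a : ℝ} (ha : 0 ≤ a) {n : ℕ} (hn : 2 ≤ n) : a ^ 2 ≤ 1 + a ^ n := by
  rcases le_total a 1 with h | h
  · nlinarith [pow_le_one₀ ha h (n := 2), pow_nonneg ha n]
  · linarith [pow_le_pow_right₀ h hn]

namespace GradFlow

variable {M N : ℕ} {A : Matrix (Fin M) (Fin N) ℝ} {y : Fin M → ℝ} {L : ℕ} {x : ℝ → Fin N → ℝ}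

lemma continuousOn (hflow : GradFlow A y L x) : ContinuousOn x (Ici 0) :=
  continuousOn_pi.2 fun i t ht => (hflow t ht i).continuousAt.continuousWithinAt

lemma continuousOn_lsqGrad (hflow : GradFlow A y L x) :
    ContinuousOn (fun t => lsqGrad A y (fun j => x t j ^ L)) (Ici 0) :=
  (continuous_lsqGrad A y).comp_continuousOn (continuousOn_pi.2 fun j =>
    ((continuousOn_pi.1 hflow.continuousOn) j).pow L)

lemma pos (hflow : GradFlow A y L x) (hL : 2 ≤ L) {i : Fin N} (h0 : 0 < x 0 i) {t : ℝ}
    (ht : 0 ≤ t) : 0 < x t i := by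
  obtain ⟨n, rfl⟩ : ∃ n, L = n + 2 := ⟨L - 2, by omega⟩
  refine pos_of_hasDerivAt_eq_mul_self (f := fun s => x s i)
    (H := fun s => -(lsqGrad A y (fun j => x s j ^ (n + 2)) i * x s i ^ n))
    (fun s hs => (hflow s hs i).congr_deriv (by
      rw [show n + 2 - 1 = n + 1 by omega, lsqGrad]; ring)) ?_ h0 ht
  exact (((continuousOn_pi.1 hflow.continuousOn_lsqGrad) i).mul
    (((continuousOn_pi.1 hflow.continuousOn) i).pow n)).neg

variable (hflow : GradFlow A y L x) (hpos : ∀ t, 0 ≤ t → ∀ i, 0 < x t i)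
include hflow hpos

lemma sum_mul_inv_pow_eq (hL : 2 ≤ L) {c : Fin N → ℝ} (hc : A *ᵥ c = 0) {T : ℝ} (hT : 0 ≤ T) :
    ∑ i, c i * (x T i ^ (L - 2))⁻¹ = ∑ i, c i * (x 0 i ^ (L - 2))⁻¹ := by
  have hderiv : ∀ t, 0 ≤ t → HasDerivAt (fun s => ∑ i, c i * (x s i ^ (L - 2))⁻¹) 0 t := by
    intro t ht
    have hflow' : ∀ i, HasDerivAt (fun s => x s i)
        (-(lsqGrad A y (fun j => x t j ^ L) i * x t i ^ (L - 2 + 1))) t := fun i => by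
      rw [show L - 2 + 1 = L - 1 by omega]; exact hflow t ht i
    refine (HasDerivAt.fun_sum fun i _ => ((hflow' i).inv_pow_of_eq_neg_mul_pow (L - 2)
      (hpos t ht i).ne').const_mul (c i)).congr_deriv ?_
    simp only [mul_left_comm (c _), ← Finset.mul_sum]
    exact mul_eq_zero_of_right _ (dotProduct_lsqGrad_eq_zero hc _)
  exact constant_of_has_deriv_right_zero
    (fun s hs => (hderiv s hs.1).continuousAt.continuousWithinAt)
    (fun s hs => (hderiv s hs.1).hasDerivWithinAt) T (right_mem_Icc.2 hT)

lemma mem_nnlsSet (hL : L ≠ 0) {ξ : Fin N → ℝ}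
    (hξ : ∀ i, Tendsto (fun t => x t i) atTop (𝓝 (ξ i))) :
    (fun i => ξ i ^ L) ∈ nnlsSet A y := by
  have hξ0 : ∀ i, 0 ≤ ξ i := fun i =>
    ge_of_tendsto (hξ i) ((eventually_ge_atTop 0).mono fun t ht => (hpos t ht i).le)
  have hgrad : Tendsto (fun t => lsqGrad A y (fun j => x t j ^ L)) atTop
      (𝓝 (lsqGrad A y (fun j => ξ j ^ L))) :=
    ((continuous_lsqGrad A y).tendsto _).comp (tendsto_pi_nhds.2 fun j => (hξ j).pow L)
  have hkkt := fun i => nonneg_and_mul_eq_zero_of_hasDerivAt_eq_neg_mul_pow (n := L - 1)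
    (fun t ht => hflow t ht i) (fun t ht => hpos t ht i) (hξ i) (tendsto_pi_nhds.1 hgrad i)
  refine mem_nnlsSet_of_kkt (fun i => pow_nonneg (hξ0 i) L) (fun i => (hkkt i).1) fun i => ?_
  rw [← pow_sub_one_mul hL, mul_assoc, (hkkt i).2, mul_zero]

lemma sum_sub_sum_le (hL : 2 ≤ L) {α : ℝ} (hα : 0 < α) (hinit : x 0 = fun _ => α)
    {ξ : Fin N → ℝ} (hξ : ∀ i, Tendsto (fun t => x t i) atTop (𝓝 (ξ i)))
    {z : Fin N → ℝ} (hz : z ∈ nnlsSet A y) :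
    ∑ i, ξ i ^ L - ∑ i, z i ≤ α ^ (L - 2) * (N + ∑ i, ξ i ^ L) := by
  obtain ⟨n, rfl⟩ : ∃ n, L = n + 2 := ⟨L - 2, by omega⟩
  have hξ0 : ∀ i, 0 ≤ ξ i := fun i =>
    ge_of_tendsto (hξ i) ((eventually_ge_atTop 0).mono fun t ht => (hpos t ht i).le)
  have hc : A *ᵥ (fun i => ξ i ^ (n + 2) - z i) = 0 := by
    rw [show (fun i => ξ i ^ (n + 2) - z i) = (fun i => ξ i ^ (n + 2)) - z from rfl,
      Matrix.mulVec_sub, mulVec_eq_of_mem_nnlsSet (hflow.mem_nnlsSet hpos (by omega) hξ) hz,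
      sub_self]
  have hbound : ∀ T, 0 ≤ T → (α ^ n)⁻¹ * (∑ i, ξ i ^ (n + 2) - ∑ i, z i)
      ≤ ∑ i, ξ i ^ (n + 2) * (x T i ^ n)⁻¹ := fun T hT =>
    calc (α ^ n)⁻¹ * (∑ i, ξ i ^ (n + 2) - ∑ i, z i)
        = ∑ i, (ξ i ^ (n + 2) - z i) * (x 0 i ^ n)⁻¹ := by
          simp only [hinit, ← Finset.sum_sub_distrib, Finset.mul_sum, mul_comm]
      _ = ∑ i, (ξ i ^ (n + 2) - z i) * (x T i ^ n)⁻¹ :=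
          (hflow.sum_mul_inv_pow_eq hpos hL hc hT).symm
      _ ≤ ∑ i, ξ i ^ (n + 2) * (x T i ^ n)⁻¹ := Finset.sum_le_sum fun i _ => by
          rw [sub_mul]
          exact sub_le_self _ (mul_nonneg (hz.1 i) (inv_nonneg.2 (pow_pos (hpos T hT i) n).le))
  have hlim : Tendsto (fun T => ∑ i, ξ i ^ (n + 2) * (x T i ^ n)⁻¹) atTop (𝓝 (∑ i, ξ i ^ 2)) :=
    tendsto_finsetSum _ fun i _ => tendsto_pow_add_two_mul_inv_pow n (hξ i)
  have hsq : ∑ i, ξ i ^ 2 ≤ N + ∑ i, ξ i ^ (n + 2) :=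
    calc ∑ i, ξ i ^ 2 ≤ ∑ i, (1 + ξ i ^ (n + 2)) :=
          Finset.sum_le_sum fun i _ => sq_le_one_add_pow (hξ0 i) (by omega)
      _ = N + ∑ i, ξ i ^ (n + 2) := by simp [Finset.sum_add_distrib]
  rw [Nat.add_sub_cancel, ← inv_mul_le_iff₀ (pow_pos hα n)]
  exact (ge_of_tendsto hlim ((eventually_ge_atTop 0).mono hbound)).trans hsq

end GradFlow

lemma pow_sub_two_le_of_le_rpow {α c : ℝ} {L : ℕ} (hL : 2 < L) (hα : 0 ≤ α) (hc : 0 ≤ c)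
    (h : α ≤ c ^ ((1 : ℝ) / ((L : ℝ) - 2))) : α ^ (L - 2) ≤ c := by
  have hL2 : ((L - 2 : ℕ) : ℝ) = (L : ℝ) - 2 := by rw [Nat.cast_sub hL.le]; norm_num
  rw [one_div, ← hL2, Real.le_rpow_inv_iff_of_pos hα hc
    (by exact_mod_cast Nat.sub_pos_of_lt hL)] at h
  exact_mod_cast h

lemma sub_le_of_sub_le_mul_add {B Q N ε c : ℝ} (hε : 0 < ε) (hQN : 0 ≤ Q + N) (hc : 0 ≤ c)
    (hcε : c * (Q + N + ε) < ε) (h : B - Q ≤ c * (N + B)) : B - Q ≤ ε := by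
  have hc1 : c < 1 := by nlinarith
  nlinarith

lemma sub_le_of_sub_le_pow_sub_two_mul {B Q N ε α : ℝ} {L : ℕ} (hL : 2 < L) (hε : 0 < ε)
    (hQ : 0 ≤ Q) (hN : 0 ≤ N) (hB : 0 ≤ B) (hα0 : 0 < α)
    (hα : α ≤ (2 * ε / (L * (Q + N + ε))) ^ ((1 : ℝ) / ((L : ℝ) - 2)))
    (h : B - Q ≤ α ^ (L - 2) * (N + B)) : B - Q ≤ ε := by
  have hS : 0 < Q + N + ε := by positivity
  have hL2 : (2 : ℝ) < L := by exact_mod_cast hL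
  have hcε : 2 * ε / (L * (Q + N + ε)) * (Q + N + ε) < ε := by
    rw [div_mul_eq_mul_div, div_lt_iff₀ (by positivity)]
    nlinarith [mul_pos (mul_pos hε hS) (sub_pos.2 hL2)]
  exact sub_le_of_sub_le_mul_add hε (by positivity) (by positivity) hcε
    (h.trans (mul_le_mul_of_nonneg_right
      (pow_sub_two_le_of_le_rpow hL hα0.le (by positivity) hα) (by positivity)))

theorem stmt3 {M N : ℕ} (L : ℕ) (hL : 2 < L)
    (A : Matrix (Fin M) (Fin N) ℝ) (y : Fin M → ℝ)
    (ε : ℝ) (hε : 0 < ε)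
    (Qp : ℝ) (hQ : IsLeast ((fun z => ∑ i, |z i|) '' nnlsSet A y) Qp)
    (α : ℝ) (hα0 : 0 < α)
    (hα : α ≤ (2 * ε / (L * (Qp + N + ε))) ^ ((1 : ℝ) / ((L : ℝ) - 2)))
    (x : ℝ → Fin N → ℝ) (hinit : x 0 = fun _ => α)
    (hflow : GradFlow A y L x)
    (xinf : Fin N → ℝ)
    (hlim : Tendsto (fun t => fun i => x t i ^ L) atTop (𝓝 xinf)) :
    (∑ i, |xinf i|) - Qp ≤ ε := by
  obtain ⟨z, hz, rfl⟩ := hQ.1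
  have hpos : ∀ t, 0 ≤ t → ∀ i, 0 < x t i := fun t ht i =>
    hflow.pos hL.le (by simp [hinit, hα0]) ht
  have hxinf0 : ∀ i, 0 ≤ xinf i := fun i => ge_of_tendsto (tendsto_pi_nhds.1 hlim i)
    ((eventually_ge_atTop 0).mono fun t ht => (pow_pos (hpos t ht i) L).le)
  have hξ : ∀ i, Tendsto (fun t => x t i) atTop (𝓝 (xinf i ^ (L⁻¹ : ℝ))) := fun i =>
    tendsto_rpow_inv_of_tendsto_pow (by omega)
      ((eventually_ge_atTop 0).mono fun t ht => (hpos t ht i).le) (tendsto_pi_nhds.1 hlim i)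
  have hbound := hflow.sum_sub_sum_le hpos hL.le hα0 hinit hξ hz
  simp only [Real.rpow_inv_natCast_pow (hxinf0 _) (by omega : L ≠ 0)] at hbound
  simp only [abs_of_nonneg (hxinf0 _), abs_of_nonneg (hz.1 _)] at hα ⊢
  exact sub_le_of_sub_le_pow_sub_two_mul hL hε (Finset.sum_nonneg fun i _ => hz.1 i)
    N.cast_nonneg (Finset.sum_nonneg fun i _ => hxinf0 i) hα0 hα hbound

end
end

section
/- Let L ≥ 2 be an integer, A ∈ ℝ^{M×N}, y ∈ ℝ^M, and let x : [0,∞) → ℝ^N be differentiable, satisfy the reduced gradient flow x'(t) = −[Aᵀ(A x(t)^{⊙L} − y)] ⊙ x(t)^{⊙(L−1)} for all t ≥ 0, and have x(t) entrywise strictly positive. Write x̃(t) := x(t)^{⊙L}. Then for every z₊ ∈ S₊ and every t ≥ 0, d/dt D_F(z₊, x̃(t)) ≤ −(1/2)‖A x̃(t) − y₊‖₂², where y₊ := A z₊ is the Euclidean projection of y onto C₊ := {Az : z ≥ 0}, and F, D_F are as defined below. In particular, t ↦ D_F(z₊, x̃(t)) is nonincreasing. -/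
open Filter Topology Matrix

noncomputable section

/-- The Bregman potential `F`: for `L = 2`, `F(x) = ½ Σₙ (xₙ log xₙ − xₙ)` (with `0·log 0 = 0`,
which holds automatically since `Real.log 0 = 0`); for `L > 2`,
`F(x) = (L/(2(2−L))) Σₙ xₙ^{2/L}`. -/
def bregF {N : ℕ} (L : ℕ) (x : Fin N → ℝ) : ℝ :=
  if L = 2 then (1 / 2) * ∑ n, (x n * Real.log (x n) - x n)
  else ((L : ℝ) / (2 * (2 - (L : ℝ)))) * ∑ n, x n ^ ((2 : ℝ) / (L : ℝ))

/-- The gradient of `F` on the positive orthant: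
`∇F(q)ₙ = ½ log qₙ` if `L = 2` and `∇F(q)ₙ = qₙ^{(2−L)/L}/(2−L)` if `L > 2`. -/
def bregGradF {N : ℕ} (L : ℕ) (q : Fin N → ℝ) : Fin N → ℝ :=
  fun n => if L = 2 then (1 / 2) * Real.log (q n)
  else q n ^ (((2 : ℝ) - (L : ℝ)) / (L : ℝ)) / (2 - (L : ℝ))

/-- The Bregman divergence `D_F(p,q) = F(p) − F(q) − ⟨∇F(q), p − q⟩`. -/
def bregD {N : ℕ} (L : ℕ) (p q : Fin N → ℝ) : ℝ :=
  bregF L p - bregF L q - ∑ n, bregGradF L q n * (p n - q n)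

/-! With `x̃ = x^{⊙L}`, the reduced flow is a mirror flow: the mirror coordinates `∇F(x̃)` move
by `d/dt ∇F(x̃) = −Aᵀ(Ax̃ − y)`, because `F''(x̃ₙ) · d/dt x̃ₙ = x'ₙ / xₙ^{L−1}`. For any Bregman
divergence `d/dt D_F(z, q) = −⟨d/dt ∇F(q), z − q⟩`, so the derivative of `D_F(z₊, x̃)` equals
`⟨Ax̃ − y, Az₊ − Ax̃⟩ = −‖Ax̃ − Az₊‖² − ⟨Az₊ − y, Ax̃ − Az₊⟩`, and the last inner product is
nonnegative by the variational inequality characterizing `Az₊` as the projection of `y` onto `C₊`.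
-/

def bregPot (L : ℕ) (v : ℝ) : ℝ :=
  if L = 2 then (1 / 2) * (v * Real.log v - v)
  else ((L : ℝ) / (2 * (2 - (L : ℝ)))) * v ^ ((2 : ℝ) / (L : ℝ))

def bregPotDeriv (L : ℕ) (v : ℝ) : ℝ :=
  if L = 2 then (1 / 2) * Real.log v
  else v ^ (((2 : ℝ) - (L : ℝ)) / (L : ℝ)) / (2 - (L : ℝ))

lemma bregD_eq_sum {N : ℕ} (L : ℕ) (p q : Fin N → ℝ) :
    bregD L p q =
      ∑ n, (bregPot L (p n) - bregPot L (q n) - bregPotDeriv L (q n) * (p n - q n)) := by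
  have hF : ∀ x : Fin N → ℝ, bregF L x = ∑ n, bregPot L (x n) := by
    intro x
    unfold bregF bregPot
    split_ifs <;> rw [Finset.mul_sum]
  simp only [bregD, hF, bregGradF, bregPotDeriv, Finset.sum_sub_distrib]

lemma hasDerivAt_bregPot {L : ℕ} (hL : L ≠ 0) {v : ℝ} (hv : 0 < v) :
    HasDerivAt (bregPot L) (bregPotDeriv L v) v := by
  unfold bregPot bregPotDeriv
  split_ifs with h2
  · refine ((((hasDerivAt_id' v).mul (Real.hasDerivAt_log hv.ne')).sub
      (hasDerivAt_id' v)).const_mul (1 / 2)).congr_deriv ?_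
    field_simp
    ring
  · have hL' : (L : ℝ) ≠ 0 := by exact_mod_cast hL
    have h2' : (2 : ℝ) - L ≠ 0 := sub_ne_zero.2 (by exact_mod_cast (Ne.symm h2))
    refine ((Real.hasDerivAt_rpow_const (p := 2 / L) (Or.inl hv.ne')).const_mul
      ((L : ℝ) / (2 * (2 - L)))).congr_deriv ?_
    rw [show (2 : ℝ) / L - 1 = (2 - L) / L by field_simp]
    field_simp

lemma hasDerivAt_bregPotDeriv {L : ℕ} (hL : L ≠ 0) {v : ℝ} (hv : 0 < v) :
    HasDerivAt (bregPotDeriv L) (v ^ ((2 : ℝ) / L - 2) / L) v := by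
  unfold bregPotDeriv
  split_ifs with h2
  · subst h2
    refine ((Real.hasDerivAt_log hv.ne').const_mul (1 / 2)).congr_deriv ?_
    rw [show (2 : ℝ) / (2 : ℕ) - 2 = -1 by norm_num, Real.rpow_neg_one]
    push_cast
    ring
  · have hL' : (L : ℝ) ≠ 0 := by exact_mod_cast hL
    have h2' : (2 : ℝ) - L ≠ 0 := sub_ne_zero.2 (by exact_mod_cast (Ne.symm h2))
    refine ((Real.hasDerivAt_rpow_const (p := (2 - L) / L) (Or.inl hv.ne')).div_const
      (2 - (L : ℝ))).congr_deriv ?_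
    rw [show (2 - L : ℝ) / L - 1 = 2 / L - 2 by field_simp; ring]
    field_simp

lemma HasDerivAt.bregman {F G q : ℝ → ℝ} {q' w z t : ℝ} (hF : HasDerivAt F (G (q t)) (q t))
    (hq : HasDerivAt q q' t) (hGq : HasDerivAt (fun s => G (q s)) w t) :
    HasDerivAt (fun s => F z - F (q s) - G (q s) * (z - q s)) (-(w * (z - q t))) t := by
  refine ((hasDerivAt_const t (F z)).sub (hF.comp t hq)).sub
    (hGq.mul (hq.const_sub z)) |>.congr_deriv ?_
  ring

lemma rpow_pow_mul_pow_pred_sq {L : ℕ} (hL : L ≠ 0) {u : ℝ} (hu : 0 < u) :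
    (u ^ L) ^ ((2 : ℝ) / L - 2) * (u ^ (L - 1)) ^ 2 = 1 := by
  have hL' : (L : ℝ) ≠ 0 := by exact_mod_cast hL
  rw [← Real.rpow_natCast u L, ← Real.rpow_mul hu.le, ← pow_mul, ← Real.rpow_natCast u,
    ← Real.rpow_add hu, Nat.cast_mul, Nat.cast_sub (Nat.one_le_iff_ne_zero.2 hL)]
  convert Real.rpow_zero u using 2
  field_simp
  ring

lemma hasDerivAt_bregPotDeriv_pow {L : ℕ} (hL : L ≠ 0) {u : ℝ → ℝ} {r t : ℝ}
    (hu : HasDerivAt u (-(r * u t ^ (L - 1))) t) (hpos : 0 < u t) :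
    HasDerivAt (fun s => bregPotDeriv L (u s ^ L)) (-r) t := by
  refine ((hasDerivAt_bregPotDeriv hL (pow_pos hpos L)).comp t (hu.pow L)).congr_deriv ?_
  have hL' : (L : ℝ) ≠ 0 := by exact_mod_cast hL
  calc _ = -r * ((u t ^ L) ^ ((2 : ℝ) / L - 2) * (u t ^ (L - 1)) ^ 2) * (L / L) := by
        ring
    _ = -r := by rw [rpow_pow_mul_pow_pred_sq hL hpos, div_self hL', mul_one, mul_one]

lemma hasDerivAt_bregD {N L : ℕ} (hL : L ≠ 0) {q : ℝ → Fin N → ℝ} {q' w : Fin N → ℝ} {t : ℝ}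
    (p : Fin N → ℝ) (hq : ∀ n, HasDerivAt (fun s => q s n) (q' n) t) (hpos : ∀ n, 0 < q t n)
    (hw : ∀ n, HasDerivAt (fun s => bregPotDeriv L (q s n)) (w n) t) :
    HasDerivAt (fun s => bregD L p (q s)) (-(w ⬝ᵥ (p - q t))) t := by
  simp only [bregD_eq_sum]
  refine (HasDerivAt.fun_sum fun n _ =>
    HasDerivAt.bregman (hasDerivAt_bregPot hL (hpos n)) (hq n) (hw n)).congr_deriv ?_
  simp [dotProduct]

lemma GradFlow.hasDerivAt_bregD {M N L : ℕ} {A : Matrix (Fin M) (Fin N) ℝ} {y : Fin M → ℝ}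
    {x : ℝ → Fin N → ℝ} (hflow : GradFlow A y L x) (hL : L ≠ 0) {t : ℝ} (ht : 0 ≤ t)
    (hpos : ∀ i, 0 < x t i) (p : Fin N → ℝ) :
    HasDerivAt (fun s => bregD L p (fun i => x s i ^ L))
      ((Aᵀ *ᵥ (A *ᵥ (fun i => x t i ^ L) - y)) ⬝ᵥ (p - fun i => x t i ^ L)) t := by
  refine (_root_.hasDerivAt_bregD hL (q := fun s i => x s i ^ L)
    (w := -(Aᵀ *ᵥ (A *ᵥ (fun i => x t i ^ L) - y))) p (fun n => (hflow t ht n).pow L)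
    (fun n => pow_pos (hpos n) L)
    (fun n => hasDerivAt_bregPotDeriv_pow hL (hflow t ht n) (hpos n))).congr_deriv ?_
  rw [neg_dotProduct, neg_neg]

lemma nonneg_of_forall_quadratic_nonneg {b c : ℝ}
    (h : ∀ θ : ℝ, 0 < θ → θ ≤ 1 → 0 ≤ 2 * θ * c + θ ^ 2 * b) : 0 ≤ c := by
  by_contra! hc
  set θ := min 1 (-c / (|b| + 1))
  have hθ : 0 < θ := lt_min one_pos (div_pos (neg_pos.2 hc) (by positivity))
  have hθc : θ * (|b| + 1) ≤ -c := (le_div_iff₀ (by positivity)).1 (min_le_right _ _)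
  have := h θ hθ (min_le_left _ _)
  nlinarith [le_abs_self b, mul_pos hθ hθ]

lemma dotProduct_sub_nonneg_of_mem_nnlsSet {M N : ℕ} {A : Matrix (Fin M) (Fin N) ℝ}
    {y : Fin M → ℝ} {z w : Fin N → ℝ} (hz : z ∈ nnlsSet A y) (hw : ∀ i, 0 ≤ w i) :
    0 ≤ (A *ᵥ z - y) ⬝ᵥ (A *ᵥ w - A *ᵥ z) := by
  set d := A *ᵥ z - y
  set e := A *ᵥ w - A *ᵥ z
  have hsq : ∀ u v : Fin M → ℝ, ∑ j, (u j - v j) ^ 2 = (u - v) ⬝ᵥ (u - v) := fun u v => by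
    simp [dotProduct, sq]
  refine nonneg_of_forall_quadratic_nonneg (b := e ⬝ᵥ e) fun θ hθ hθ1 => ?_
  have hv : ∀ i, 0 ≤ (z + θ • (w - z)) i := fun i => by
    have := hz.1 i
    have := hw i
    simp only [Pi.add_apply, Pi.smul_apply, Pi.sub_apply, smul_eq_mul]
    nlinarith
  have hmin := hz.2 _ hv
  have hres : A *ᵥ (z + θ • (w - z)) - y = d + θ • e := by
    simp only [d, e, mulVec_add, mulVec_smul, mulVec_sub]
    abel
  rw [hsq, hsq, hres] at hmin
  simp only [add_dotProduct, dotProduct_add, smul_dotProduct, dotProduct_smul, smul_eq_mul,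
    dotProduct_comm e d] at hmin
  nlinarith

lemma gradient_dotProduct_le_of_mem_nnlsSet {M N : ℕ} {A : Matrix (Fin M) (Fin N) ℝ}
    {y : Fin M → ℝ} {z q : Fin N → ℝ} (hz : z ∈ nnlsSet A y) (hq : ∀ i, 0 ≤ q i) :
    (Aᵀ *ᵥ (A *ᵥ q - y)) ⬝ᵥ (z - q) ≤ -∑ j, ((A *ᵥ q) j - (A *ᵥ z) j) ^ 2 := by
  have hvar := dotProduct_sub_nonneg_of_mem_nnlsSet hz hq
  have hsplit : (Aᵀ *ᵥ (A *ᵥ q - y)) ⬝ᵥ (z - q)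
      = -((A *ᵥ q - A *ᵥ z) ⬝ᵥ (A *ᵥ q - A *ᵥ z))
        - (A *ᵥ z - y) ⬝ᵥ (A *ᵥ q - A *ᵥ z) := by
    rw [mulVec_transpose, ← dotProduct_mulVec, mulVec_sub, ← neg_sub (A *ᵥ q),
      show A *ᵥ q - y = (A *ᵥ q - A *ᵥ z) + (A *ᵥ z - y) by abel]
    simp only [add_dotProduct, dotProduct_neg]
    ring
  rw [hsplit]
  simp only [dotProduct, Pi.sub_apply, ← sq] at hvar ⊢
  linarith

theorem stmt14 {M N : ℕ} (L : ℕ) (hL : 2 ≤ L)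
    (A : Matrix (Fin M) (Fin N) ℝ) (y : Fin M → ℝ)
    (x : ℝ → Fin N → ℝ)
    (hflow : GradFlow A y L x)
    (hpos : ∀ t : ℝ, 0 ≤ t → ∀ i, 0 < x t i)
    (zp : Fin N → ℝ) (hzp : zp ∈ nnlsSet A y) :
    (∀ t : ℝ, 0 ≤ t → ∃ dv : ℝ,
      HasDerivAt (fun s => bregD L zp (fun i => x s i ^ L)) dv t ∧
      dv ≤ -(1 / 2) * ∑ j, (A.mulVec (fun i => x t i ^ L) j - A.mulVec zp j) ^ 2) ∧
    AntitoneOn (fun t => bregD L zp (fun i => x t i ^ L)) (Set.Ici 0) := by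
  have hL0 : L ≠ 0 := by omega
  set rate : ℝ → ℝ := fun t =>
    (Aᵀ *ᵥ (A *ᵥ (fun i => x t i ^ L) - y)) ⬝ᵥ (zp - fun i => x t i ^ L)
  have hderiv (t : ℝ) (ht : 0 ≤ t) :
      HasDerivAt (fun s => bregD L zp (fun i => x s i ^ L)) (rate t) t :=
    hflow.hasDerivAt_bregD hL0 ht (hpos t ht) zp
  have hsq_nonneg (t : ℝ) :
      0 ≤ ∑ j, (A.mulVec (fun i => x t i ^ L) j - A.mulVec zp j) ^ 2 :=
    Finset.sum_nonneg fun j _ => sq_nonneg _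
  have hdecay (t : ℝ) (ht : 0 ≤ t) :
      rate t ≤ -(1 / 2) * ∑ j, (A.mulVec (fun i => x t i ^ L) j - A.mulVec zp j) ^ 2 := by
    have := gradient_dotProduct_le_of_mem_nnlsSet hzp (fun i => pow_nonneg (hpos t ht i).le L)
    linarith [hsq_nonneg t]
  refine ⟨fun t ht => ⟨rate t, hderiv t ht, hdecay t ht⟩, ?_⟩
  refine antitoneOn_of_hasDerivWithinAt_nonpos (f' := rate) (convex_Ici 0)
    (fun t ht => (hderiv t ht).continuousAt.continuousWithinAt) (fun t ht => ?_) (fun t ht => ?_)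
  all_goals rw [interior_Ici] at ht
  · exact (hderiv t ht.le).hasDerivWithinAt
  · linarith [hdecay t ht.le, hsq_nonneg t]
end
end

section
/- Let L ≥ 2 be an integer, A ∈ ℝ^{M×N}, y ∈ ℝ^M, and let x : [0,∞) → ℝ^N be differentiable, satisfy the reduced gradient flow x'(t) = −[Aᵀ(A x(t)^{⊙L} − y)] ⊙ x(t)^{⊙(L−1)} for all t ≥ 0, and have x(t) entrywise strictly positive. Write x̃(t) := x(t)^{⊙L}, fix z₊ ∈ S₊, let y₊ := A z₊, and set C := D_F(z₊, x̃(0)) where F, D_F are as defined below. Then for every T > 0 there exists t ∈ [0,T] with ‖A x̃(t) − y₊‖₂² ≤ 2C/T. -/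
open Filter Topology Matrix

noncomputable section

/-!
Write `x̃ = x^{⊙L}`. Along the flow `x̃' = -L x^{⊙(2L-2)} ⊙ Aᵀ(Ax̃ - y)`, and the Hessian of `F`,
`∇²F(q) = diag(q^{2/L-2}/L)`, is exactly the inverse of this preconditioner. Hence the Bregman
divergence `V(t) = D_F(z₊, x̃(t))` has derivative `⟨Aᵀ(Ax̃ - y), z₊ - x̃⟩ = ⟨Ax̃ - y, y₊ - Ax̃⟩`,
which the variational inequality `⟨y - y₊, Aw - y₊⟩ ≤ 0` (for `w ≥ 0`) characterising `y₊` bounds by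
`-‖Ax̃ - y₊‖²`. As `F` is convex, `V ≥ 0`, and the mean value theorem on `[0, T]` yields a time with
`‖Ax̃ - y₊‖² ≤ V(0)/T ≤ 2C/T`.
-/

lemma ConvexOn.add_deriv_mul_sub_le {S : Set ℝ} {f : ℝ → ℝ} {x y f' : ℝ}
    (hf : ConvexOn ℝ S f) (hx : x ∈ S) (hy : y ∈ S) (hf' : HasDerivAt f f' x) :
    f x + f' * (y - x) ≤ f y := by
  rcases lt_trichotomy x y with hxy | rfl | hxy
  · have := hf.le_slope_of_hasDerivAt hx hy hxy hf'
    rw [slope_def_field, le_div_iff₀ (sub_pos.2 hxy)] at this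
    linarith
  · simp
  · have := hf.slope_le_of_hasDerivAt hy hx hxy hf'
    rw [slope_def_field, div_le_iff₀ (sub_pos.2 hxy)] at this
    linarith

lemma nonneg_of_forall_mul_add_mul_sq_nonneg {s c : ℝ}
    (h : ∀ θ ∈ Set.Ioc (0 : ℝ) 1, 0 ≤ s * θ + c * θ ^ 2) : 0 ≤ s := by
  by_contra! hs
  have hc : -s ≤ c := by linarith [h 1 ⟨one_pos, le_rfl⟩]
  have hc0 : 0 < c := by linarith
  have hθ := h (-s / (2 * c))
    ⟨div_pos (by linarith) (by linarith), by rw [div_le_one (by positivity)]; linarith⟩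
  have hval : s * (-s / (2 * c)) + c * (-s / (2 * c)) ^ 2 = -(s ^ 2 / (4 * c)) := by
    field_simp
    ring
  have : 0 < s ^ 2 / (4 * c) := div_pos (by nlinarith) (by linarith)
  linarith

lemma exists_le_div_of_hasDerivAt_le_neg {V V' g : ℝ → ℝ} {T : ℝ} (hT : 0 < T)
    (hV : ∀ t ∈ Set.Icc 0 T, HasDerivAt V (V' t) t) (hV' : ∀ t ∈ Set.Icc 0 T, V' t ≤ -g t)
    (hVT : 0 ≤ V T) : ∃ t ∈ Set.Icc 0 T, g t ≤ V 0 / T := by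
  obtain ⟨c, hc, hslope⟩ := exists_hasDerivAt_eq_slope V V' hT
    (fun t ht => (hV t ht).continuousAt.continuousWithinAt)
    (fun t ht => hV t (Set.Ioo_subset_Icc_self ht))
  have hc' := Set.Ioo_subset_Icc_self hc
  refine ⟨c, hc', ?_⟩
  rw [sub_zero] at hslope
  rw [le_div_iff₀ hT]
  calc g c * T ≤ -V' c * T := mul_le_mul_of_nonneg_right (by linarith [hV' c hc']) hT.le
    _ = V 0 - V T := by rw [hslope]; field_simp; ring
    _ ≤ V 0 := by linarith

def bregPhi (L : ℕ) (q : ℝ) : ℝ :=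
  if L = 2 then (1 / 2) * (q * Real.log q - q)
  else ((L : ℝ) / (2 * (2 - (L : ℝ)))) * q ^ ((2 : ℝ) / (L : ℝ))

def bregPsi (L : ℕ) (q : ℝ) : ℝ :=
  if L = 2 then (1 / 2) * Real.log q
  else q ^ (((2 : ℝ) - (L : ℝ)) / (L : ℝ)) / (2 - (L : ℝ))

def bregDiv (L : ℕ) (p q : ℝ) : ℝ :=
  bregPhi L p - bregPhi L q - bregPsi L q * (p - q)

lemma bregD_eq_sum_bregDiv {N : ℕ} (L : ℕ) (p q : Fin N → ℝ) :
    bregD L p q = ∑ n, bregDiv L (p n) (q n) := by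
  have hF : ∀ x : Fin N → ℝ, bregF L x = ∑ n, bregPhi L (x n) := by
    intro x
    unfold bregF bregPhi
    split_ifs <;> rw [Finset.mul_sum]
  simp only [bregD, bregDiv, hF, Finset.sum_sub_distrib]
  rfl

lemma hasDerivAt_bregPhi {L : ℕ} (hL : L ≠ 0) {q : ℝ} (hq : 0 < q) :
    HasDerivAt (bregPhi L) (bregPsi L q) q := by
  by_cases h2 : L = 2
  · subst h2
    unfold bregPhi bregPsi
    simp only [↓reduceIte]
    refine (((Real.hasDerivAt_mul_log hq.ne').sub (hasDerivAt_id q)).const_mul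
      (1 / 2 : ℝ)).congr_deriv ?_
    ring
  · unfold bregPhi bregPsi
    simp only [h2, ↓reduceIte]
    have hL0 : (L : ℝ) ≠ 0 := by exact_mod_cast hL
    have h2L : (2 : ℝ) - L ≠ 0 := sub_ne_zero.2 (by exact_mod_cast (Ne.symm h2))
    refine ((Real.hasDerivAt_rpow_const (p := 2 / L) (Or.inl hq.ne')).const_mul
      ((L : ℝ) / (2 * (2 - L)))).congr_deriv ?_
    rw [show (2 : ℝ) / L - 1 = (2 - L) / L by field_simp]
    field_simp

lemma hasDerivAt_bregPsi {L : ℕ} (hL : L ≠ 0) {q : ℝ} (hq : 0 < q) :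
    HasDerivAt (bregPsi L) (q ^ ((2 : ℝ) / L - 2) / L) q := by
  by_cases h2 : L = 2
  · subst h2
    unfold bregPsi
    simp only [↓reduceIte]
    refine ((Real.hasDerivAt_log hq.ne').const_mul (1 / 2 : ℝ)).congr_deriv ?_
    norm_num [Real.rpow_neg_one]
    ring
  · unfold bregPsi
    simp only [h2, ↓reduceIte]
    have hL0 : (L : ℝ) ≠ 0 := by exact_mod_cast hL
    have h2L : (2 : ℝ) - L ≠ 0 := sub_ne_zero.2 (by exact_mod_cast (Ne.symm h2))
    refine ((Real.hasDerivAt_rpow_const (p := (2 - L) / L) (Or.inl hq.ne')).div_const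
      (2 - (L : ℝ))).congr_deriv ?_
    rw [show (2 - L : ℝ) / L - 1 = 2 / L - 2 by field_simp; ring]
    field_simp

lemma convexOn_bregPhi {L : ℕ} (hL : 2 ≤ L) : ConvexOn ℝ (Set.Ici 0) (bregPhi L) := by
  rcases hL.eq_or_lt with rfl | hL
  · refine ((Real.convexOn_mul_log.sub (concaveOn_id (convex_Ici 0))).smul
      (by norm_num : (0 : ℝ) ≤ 1 / 2)).congr fun q _ => ?_
    simp [bregPhi]
  · have hL' : (2 : ℝ) < L := by exact_mod_cast hL
    have hc : 0 ≤ -((L : ℝ) / (2 * (2 - (L : ℝ)))) :=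
      neg_nonneg.2 (div_nonpos_of_nonneg_of_nonpos (by positivity) (by linarith))
    refine ((Real.concaveOn_rpow (by positivity) ((div_le_one (by positivity)).2 hL'.le)).neg.smul
      hc).congr fun q _ => ?_
    simp [bregPhi, hL.ne']

lemma bregDiv_nonneg {L : ℕ} (hL : 2 ≤ L) {p q : ℝ} (hp : 0 ≤ p) (hq : 0 < q) :
    0 ≤ bregDiv L p q := by
  have := (convexOn_bregPhi hL).add_deriv_mul_sub_le (Set.mem_Ici.2 hq.le) (Set.mem_Ici.2 hp)
    (hasDerivAt_bregPhi (by omega) hq)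
  unfold bregDiv
  linarith

lemma bregD_nonneg {N L : ℕ} (hL : 2 ≤ L) {p q : Fin N → ℝ} (hp : ∀ n, 0 ≤ p n)
    (hq : ∀ n, 0 < q n) : 0 ≤ bregD L p q := by
  rw [bregD_eq_sum_bregDiv]
  exact Finset.sum_nonneg fun n _ => bregDiv_nonneg hL (hp n) (hq n)

lemma hasDerivAt_bregDiv_right {L : ℕ} (hL : L ≠ 0) (p : ℝ) {q : ℝ} (hq : 0 < q) :
    HasDerivAt (bregDiv L p) (-(q ^ ((2 : ℝ) / L - 2) / L * (p - q))) q := by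
  refine (((hasDerivAt_const q (bregPhi L p)).sub (hasDerivAt_bregPhi hL hq)).sub
    ((hasDerivAt_bregPsi hL hq).mul ((hasDerivAt_id' q).const_sub p))).congr_deriv ?_
  ring

lemma rpow_two_div_sub_two_mul_sq {u : ℝ} (hu : 0 < u) {L : ℕ} (hL : L ≠ 0) :
    (u ^ L) ^ ((2 : ℝ) / L - 2) * (u ^ (L - 1)) ^ 2 = 1 := by
  have hL0 : (L : ℝ) ≠ 0 := by exact_mod_cast hL
  rw [← pow_mul, ← Real.rpow_natCast, ← Real.rpow_natCast, ← Real.rpow_mul hu.le,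
    ← Real.rpow_add hu, Nat.cast_mul, Nat.cast_sub (Nat.one_le_iff_ne_zero.2 hL)]
  convert Real.rpow_zero u using 2
  field_simp
  ring

lemma hasDerivAt_bregDiv_pow {L : ℕ} (hL : L ≠ 0) (p : ℝ) {u : ℝ → ℝ} {t v : ℝ}
    (hu : 0 < u t) (hu' : HasDerivAt u (-(v * u t ^ (L - 1))) t) :
    HasDerivAt (fun s => bregDiv L p (u s ^ L)) (v * (p - u t ^ L)) t := by
  refine ((hasDerivAt_bregDiv_right hL p (pow_pos hu L)).comp t (hu'.pow L)).congr_deriv ?_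
  have hQ := rpow_two_div_sub_two_mul_sq hu hL
  have hL0 : (L : ℝ) * (L : ℝ)⁻¹ = 1 := mul_inv_cancel₀ (by exact_mod_cast hL)
  linear_combination (v * (p - u t ^ L)) * hQ
    + ((u t ^ L) ^ ((2 : ℝ) / L - 2) * (u t ^ (L - 1)) ^ 2 * v * (p - u t ^ L)) * hL0

lemma dotProduct_sub_mulVec_nonpos_of_mem_nnlsSet {M N : ℕ} {A : Matrix (Fin M) (Fin N) ℝ}
    {y : Fin M → ℝ} {z : Fin N → ℝ} (hz : z ∈ nnlsSet A y) {w : Fin N → ℝ} (hw : ∀ i, 0 ≤ w i) :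
    (y - A *ᵥ z) ⬝ᵥ (A *ᵥ w - A *ᵥ z) ≤ 0 := by
  set r := A *ᵥ z - y
  set b := A *ᵥ w - A *ᵥ z
  suffices 0 ≤ 2 * (r ⬝ᵥ b) by
    rw [← neg_sub, neg_dotProduct]
    linarith
  -- first-order optimality of `z` along the feasible segment `z + θ • (w - z)`, `θ ∈ (0, 1]`
  refine nonneg_of_forall_mul_add_mul_sq_nonneg (c := b ⬝ᵥ b) fun θ hθ => ?_
  have hzθ : ∀ i, 0 ≤ (z + θ • (w - z)) i := fun i => by
    have := hz.1 i
    have := hw i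
    simp only [Pi.add_apply, Pi.smul_apply, Pi.sub_apply, smul_eq_mul]
    nlinarith [hθ.1, hθ.2]
  have hres : ∀ j, (A *ᵥ (z + θ • (w - z))) j - y j = r j + θ * b j := fun j => by
    simp only [r, b, mulVec_add, mulVec_smul, mulVec_sub, Pi.add_apply, Pi.smul_apply,
      Pi.sub_apply, smul_eq_mul]
    ring
  have hmin : ∑ j, r j ^ 2 ≤ ∑ j, (r j + θ * b j) ^ 2 := by
    have := hz.2 _ hzθ
    simp only [hres] at this
    exact this
  have hexp : ∑ j, (r j + θ * b j) ^ 2 = ∑ j, r j ^ 2 + (2 * (r ⬝ᵥ b) * θ + b ⬝ᵥ b * θ ^ 2) := by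
    simp only [dotProduct, Finset.mul_sum, Finset.sum_mul, ← Finset.sum_add_distrib]
    exact Finset.sum_congr rfl fun j _ => by ring
  linarith

lemma transpose_mulVec_residual_dotProduct_le {M N : ℕ} {A : Matrix (Fin M) (Fin N) ℝ}
    {y : Fin M → ℝ} {z : Fin N → ℝ} (hz : z ∈ nnlsSet A y) {q : Fin N → ℝ} (hq : ∀ i, 0 ≤ q i) :
    (Aᵀ *ᵥ (A *ᵥ q - y)) ⬝ᵥ (z - q) ≤ -∑ j, ((A *ᵥ q) j - (A *ᵥ z) j) ^ 2 := by
  have hsplit : (A *ᵥ q - y) ⬝ᵥ (A *ᵥ z - A *ᵥ q) =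
      (y - A *ᵥ z) ⬝ᵥ (A *ᵥ q - A *ᵥ z) - ∑ j, ((A *ᵥ q) j - (A *ᵥ z) j) ^ 2 := by
    simp only [dotProduct, Pi.sub_apply, ← Finset.sum_sub_distrib]
    exact Finset.sum_congr rfl fun j _ => by ring
  rw [mulVec_transpose, ← dotProduct_mulVec, mulVec_sub, hsplit]
  linarith [dotProduct_sub_mulVec_nonpos_of_mem_nnlsSet hz hq]

lemma hasDerivAt_bregD_of_gradFlow {M N L : ℕ} (hL : L ≠ 0) {A : Matrix (Fin M) (Fin N) ℝ}
    {y : Fin M → ℝ} {x : ℝ → Fin N → ℝ} (hflow : GradFlow A y L x) (z : Fin N → ℝ) {t : ℝ}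
    (ht : 0 ≤ t) (hx : ∀ i, 0 < x t i) :
    HasDerivAt (fun s => bregD L z fun i => x s i ^ L)
      ((Aᵀ *ᵥ (A *ᵥ (fun i => x t i ^ L) - y)) ⬝ᵥ (z - fun i => x t i ^ L)) t := by
  simp only [bregD_eq_sum_bregDiv]
  exact HasDerivAt.fun_sum fun i _ => hasDerivAt_bregDiv_pow hL (z i) (hx i) (hflow t ht i)

theorem stmt19 {M N : ℕ} (L : ℕ) (hL : 2 ≤ L)
    (A : Matrix (Fin M) (Fin N) ℝ) (y : Fin M → ℝ)
    (x : ℝ → Fin N → ℝ)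
    (hflow : GradFlow A y L x)
    (hpos : ∀ t : ℝ, 0 ≤ t → ∀ i, 0 < x t i)
    (zp : Fin N → ℝ) (hzp : zp ∈ nnlsSet A y)
    (C : ℝ) (hC : C = bregD L zp (fun i => x 0 i ^ L)) :
    ∀ T : ℝ, 0 < T → ∃ t ∈ Set.Icc (0 : ℝ) T,
      ∑ j, (A.mulVec (fun i => x t i ^ L) j - A.mulVec zp j) ^ 2 ≤ 2 * C / T := by
  intro T hT
  have hpowpos : ∀ t, 0 ≤ t → ∀ i, 0 < x t i ^ L := fun t ht i => pow_pos (hpos t ht i) L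
  obtain ⟨t, ht, hle⟩ := exists_le_div_of_hasDerivAt_le_neg hT
    (fun t ht => hasDerivAt_bregD_of_gradFlow (by omega) hflow zp ht.1 (hpos t ht.1))
    (fun t ht => transpose_mulVec_residual_dotProduct_le hzp fun i => (hpowpos t ht.1 i).le)
    (bregD_nonneg hL hzp.1 (hpowpos T hT.le))
  have hC0 : 0 ≤ C := hC ▸ bregD_nonneg hL hzp.1 (hpowpos 0 le_rfl)
  refine ⟨t, ht, hle.trans ?_⟩
  rw [← hC]
  gcongr
  linarith
end
end
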